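/- arXiv:cs/9909013 — 9 statements merged into one kernel-verified Lean document; each statement's English description precedes it below -/
import Mathlib

section
/- In a legitimate configuration of Dijkstra's ring, exactly one node is privileged. -/
/-- Predecessor node on the ring (anti-clockwise neighbour); node 0's neighbour is handled separately. -/
def ringPred (N : ℕ) (i : Fin (N + 1)) : Fin (N + 1) :=
  ⟨i.val - 1, Nat.lt_of_le_of_lt (Nat.sub_le _ _) i.isLt⟩

/-- Node `i` is privileged in configuration `x`. -/
def Privileged (N K : ℕ) (x : Fin (N + 1) → ZMod K) (i : Fin (N + 1)) : Prop :=
  (i.val = 0 ∧ x 0 = x (Fin.last N)) ∨ (0 < i.val ∧ x i ≠ x (ringPred N i))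

/-- The value node `i` writes when it fires. -/
def fireVal (N K : ℕ) (x : Fin (N + 1) → ZMod K) (i : Fin (N + 1)) : ZMod K :=
  if i.val = 0 then x 0 + 1 else x (ringPred N i)

/-- One step of Dijkstra's protocol: a single privileged node fires. -/
def Step (N K : ℕ) (x x' : Fin (N + 1) → ZMod K) : Prop :=
  ∃ i : Fin (N + 1), Privileged N K x i ∧ x' = Function.update x i (fireVal N K x i)

/-- An execution: each configuration is obtained from the previous by one step. -/
def Execution (N K : ℕ) (x : ℕ → Fin (N + 1) → ZMod K) : Prop :=
  ∀ t : ℕ, Step N K (x t) (x (t + 1))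

/-- Node `i` fires at time `t` in execution `x`. -/
def Fires (N K : ℕ) (x : ℕ → Fin (N + 1) → ZMod K) (i : Fin (N + 1)) (t : ℕ) : Prop :=
  Privileged N K (x t) i ∧ x (t + 1) = Function.update (x t) i (fireVal N K (x t) i)

/-- Fairness: every continuously privileged node eventually fires. -/
def Fair (N K : ℕ) (x : ℕ → Fin (N + 1) → ZMod K) : Prop :=
  ∀ (i : Fin (N + 1)) (t : ℕ), (∀ s, t ≤ s → Privileged N K (x s) i) → ∃ s, t ≤ s ∧ Fires N K x i s

/-- Legitimate configuration with explicit parameters `(a, j)`. -/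
def LegitimateP (N K : ℕ) (a : ZMod K) (j : ℕ) (x : Fin (N + 1) → ZMod K) : Prop :=
  j ≤ N + 1 ∧ (∀ i : Fin (N + 1), i.val < j → x i = a) ∧
    (∀ i : Fin (N + 1), j ≤ i.val → x i = a - 1)

/-- Legitimate configuration. -/
def Legitimate (N K : ℕ) (x : Fin (N + 1) → ZMod K) : Prop :=
  ∃ (a : ZMod K) (j : ℕ), LegitimateP N K a j x

/-- In a legitimate configuration, exactly one node is privileged. -/
theorem legitimate_unique_privileged (N K : ℕ) (hN : 1 ≤ N) (hK : 2 ≤ K)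
    (x : Fin (N + 1) → ZMod K) (hx : Legitimate N K x) :
    ∃! i : Fin (N + 1), Privileged N K x i := by
  obtain ⟨a, j, hj, hlt, hge⟩ := hx
  haveI : Fact (1 < K) := ⟨hK⟩
  have hane : a - 1 ≠ a := by
    intro h
    have : (1 : ZMod K) = 0 := by
      have := sub_eq_self.mp h
      simpa using this
    exact one_ne_zero this
  by_cases hj0 : j = 0
  · subst hj0
    refine ⟨0, Or.inl ⟨rfl, ?_⟩, ?_⟩
    · rw [hge 0 (Nat.zero_le _), hge (Fin.last N) (Nat.zero_le _)]
    · intro i hi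
      rcases hi with ⟨h0, _⟩ | ⟨hpos, hne⟩
      · exact Fin.ext h0
      · exact absurd (by rw [hge i (Nat.zero_le _), hge (ringPred N i) (Nat.zero_le _)]) hne
  · by_cases hjN : j = N + 1
    · subst hjN
      refine ⟨0, Or.inl ⟨rfl, ?_⟩, ?_⟩
      · rw [hlt 0 (Nat.succ_pos _), hlt (Fin.last N) (Fin.is_lt _)]
      · intro i hi
        rcases hi with ⟨h0, _⟩ | ⟨hpos, hne⟩
        · exact Fin.ext h0
        · exact absurd (by rw [hlt i (Fin.is_lt _), hlt (ringPred N i) (Fin.is_lt _)]) hne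
    · have hjpos : 0 < j := Nat.pos_of_ne_zero hj0
      have hjle : j ≤ N := by omega
      have hjlt : j < N + 1 := by omega
      refine ⟨⟨j, hjlt⟩, Or.inr ⟨hjpos, ?_⟩, ?_⟩
      · have h1 : x ⟨j, hjlt⟩ = a - 1 := hge _ le_rfl
        have h2 : x (ringPred N ⟨j, hjlt⟩) = a := hlt _ (by simp [ringPred]; omega)
        rw [h1, h2]; exact hane
      · intro i hi
        rcases hi with ⟨h0, heq⟩ | ⟨hpos, hne⟩
        · exfalso
          have hx0 : x 0 = a := hlt 0 (by simpa using hjpos)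
          have hxl : x (Fin.last N) = a - 1 := hge _ (by simpa using hjle)
          rw [hx0, hxl] at heq
          exact hane heq.symm
        · by_cases hij : i.val < j
          · exfalso
            apply hne
            rw [hlt i hij, hlt (ringPred N i) (by simp [ringPred]; omega)]
          · have hij' : j ≤ i.val := Nat.le_of_not_lt hij
            rcases Nat.eq_or_lt_of_le hij' with heq | hlt2
            · exact Fin.ext heq.symm
            · exfalso
              apply hne
              rw [hge i hij', hge (ringPred N i) (by simp [ringPred]; omega)]
end

section
/- The set of legitimate configurations is closed under protocol steps: if x is legitimate and x' is obtained from x by one move of Dijkstra's protocol (node 0 fires: x'[0] = x[0] + 1 when x[0] = x[N]; node i ≥ 1 fires: x'[i] = x[i-1] when x[i] ≠ x[i-1]; all other components unchanged), then x' is legitimate. -/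
/-- Legitimate configurations are closed under protocol steps. -/
theorem legitimate_closed_under_step (N K : ℕ) (hN : 1 ≤ N) (hK : 2 ≤ K)
    (x x' : Fin (N + 1) → ZMod K) (hx : Legitimate N K x) (hstep : Step N K x x') :
    Legitimate N K x' := by
  obtain ⟨a, j, hj, h1, h2⟩ := hx
  obtain ⟨i, hpriv, hx'⟩ := hstep
  subst hx'
  have hone : (1 : ZMod K) ≠ 0 := by
    haveI : Fact (1 < K) := ⟨by omega⟩
    exact one_ne_zero
  rcases Nat.eq_zero_or_pos i.val with hi0 | hipos
  · -- node 0 fires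
    have hi : i = 0 := Fin.ext hi0
    subst hi
    have h0N : x 0 = x (Fin.last N) := by
      rcases hpriv with ⟨_, h⟩ | ⟨h, _⟩
      · exact h
      · simp at h
    have hfv : fireVal N K x 0 = x 0 + 1 := by simp [fireVal]
    rcases Nat.eq_zero_or_pos j with hj0 | hjpos
    · -- j = 0 : everything is a - 1
      refine ⟨a, 1, by omega, ?_, ?_⟩
      · intro k hk
        have hk0 : k = 0 := Fin.ext (by omega)
        subst hk0
        have : x 0 = a - 1 := h2 0 (by omega)
        simp [Function.update_self, hfv, this]
      · intro k hk
        have hk0 : k ≠ 0 := by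
          intro h; rw [h] at hk; simp at hk
        rw [Function.update_of_ne hk0]
        exact h2 k (by omega)
    · -- j > 0 : x 0 = a, so x (last N) = a, so j = N + 1
      have hx0 : x 0 = a := h1 0 (by simpa using hjpos)
      have hjN : j = N + 1 := by
        by_contra h
        have hjle : j ≤ N := by omega
        have : x (Fin.last N) = a - 1 := h2 (Fin.last N) (by simp [Fin.last]; omega)
        rw [h0N, this] at hx0
        apply hone
        have : a - 1 - a = a - a := by rw [hx0]
        simpa [sub_sub_cancel_left] using this.symm
      refine ⟨a + 1, 1, by omega, ?_, ?_⟩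
      · intro k hk
        have hk0 : k = 0 := Fin.ext (by omega)
        subst hk0
        simp [Function.update_self, hfv, hx0]
      · intro k hk
        have hk0 : k ≠ 0 := by
          intro h; rw [h] at hk; simp at hk
        rw [Function.update_of_ne hk0]
        have : x k = a := h1 k (by omega)
        rw [this]; ring
  · -- node i ≥ 1 fires
    have hne : x i ≠ x (ringPred N i) := by
      rcases hpriv with ⟨h, _⟩ | ⟨_, h⟩
      · omega
      · exact h
    have hpredval : (ringPred N i).val = i.val - 1 := rfl
    have hji : j = i.val := by
      by_contra h
      rcases Nat.lt_or_ge i.val j with hlt | hge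
      · exact hne (by rw [h1 i hlt, h1 (ringPred N i) (by omega)])
      · have hpj : j ≤ (ringPred N i).val := by omega
        exact hne (by rw [h2 i hge, h2 (ringPred N i) hpj])
    have hfv : fireVal N K x i = a := by
      have : fireVal N K x i = x (ringPred N i) := by
        simp [fireVal, Nat.pos_iff_ne_zero.mp hipos]
      rw [this, h1 (ringPred N i) (by omega)]
    refine ⟨a, i.val + 1, by omega, ?_, ?_⟩
    · intro k hk
      by_cases hki : k = i
      · subst hki; simp [Function.update_self, hfv]
      · rw [Function.update_of_ne hki]
        have : k.val ≠ i.val := fun h => hki (Fin.ext h)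
        exact h1 k (by omega)
    · intro k hk
      have hki : k ≠ i := by
        intro h; subst h; omega
      rw [Function.update_of_ne hki]
      exact h2 k (by omega)
end

section
/- In any infinite fair execution of Dijkstra's protocol under a central daemon, node 0 fires infinitely often. -/
/-- Weight of node `j`: contributes `N+1-j` if there is a "boundary" at `j`. -/
def Fw (N K : ℕ) (x : Fin (N + 1) → ZMod K) (j : Fin (N + 1)) : ℕ :=
  if j.val ≠ 0 ∧ x j ≠ x (ringPred N j) then N + 1 - j.val else 0

/-- The variant function: weighted count of boundaries. -/
def Mw (N K : ℕ) (x : Fin (N + 1) → ZMod K) : ℕ := ∑ j, Fw N K x j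

lemma ringPred_ne (N : ℕ) (i : Fin (N + 1)) (hi : i.val ≠ 0) : ringPred N i ≠ i := by
  intro h
  have h2 : i.val - 1 = i.val := congrArg Fin.val h
  omega

lemma ringPred_eq_iff (N : ℕ) (i j : Fin (N + 1)) (hi : i.val ≠ 0) :
    ringPred N j = i ↔ j.val = i.val + 1 := by
  simp only [ringPred, Fin.ext_iff]
  constructor <;> intro h <;> omega

lemma Fw_le (N K : ℕ) (x : Fin (N + 1) → ZMod K) (j : Fin (N + 1)) :
    Fw N K x j ≤ N + 1 - j.val := by
  unfold Fw; split <;> omega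

lemma measure_decreases (N K : ℕ) (x x' : Fin (N + 1) → ZMod K) (i : Fin (N + 1))
    (hi : i.val ≠ 0) (hp : Privileged N K x i)
    (hx' : x' = Function.update x i (fireVal N K x i)) :
    Mw N K x' < Mw N K x := by
  have hbd : x i ≠ x (ringPred N i) := by
    rcases hp with ⟨h0, _⟩ | ⟨_, h⟩
    · exact absurd h0 hi
    · exact h
  have hfv : fireVal N K x i = x (ringPred N i) := by simp [fireVal, hi]
  have hx'i : x' i = x (ringPred N i) := by simp [hx', hfv]
  have hx'ne : ∀ j : Fin (N + 1), j ≠ i → x' j = x j := by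
    intro j hj; simp [hx', Function.update_of_ne hj]
  -- Fw of x' at any j ≠ i with j.val ≠ i.val + 1 is unchanged
  have hsame : ∀ j : Fin (N + 1), j ≠ i → j.val ≠ i.val + 1 → Fw N K x' j = Fw N K x j := by
    intro j hj hj1
    have hpj : ringPred N j ≠ i := by
      intro h; exact hj1 ((ringPred_eq_iff N i j hi).mp h)
    unfold Fw
    rw [hx'ne j hj, hx'ne _ hpj]
  -- Fw of x' at i is 0
  have hFi' : Fw N K x' i = 0 := by
    have : x' i = x' (ringPred N i) := by
      rw [hx'i, hx'ne _ (ringPred_ne N i hi)]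
    simp [Fw, this]
  -- Fw of x at i is N + 1 - i.val
  have hFi : Fw N K x i = N + 1 - i.val := by
    simp [Fw, hi, hbd]
  by_cases hiN : i.val = N
  · -- no successor node: every other term unchanged, term at i drops
    refine Finset.sum_lt_sum ?_ ⟨i, Finset.mem_univ i, ?_⟩
    · intro j _
      by_cases hj : j = i
      · rw [hj, hFi', hFi]; omega
      · rw [hsame j hj (by have := j.isLt; omega)]
    · rw [hFi', hFi]; have := i.isLt; omega
  · -- successor node j₀ exists
    have hiN' : i.val < N := lt_of_le_of_ne (by have := i.isLt; omega) hiN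
    set j₀ : Fin (N + 1) := ⟨i.val + 1, by omega⟩ with hj₀def
    have hj₀i : j₀ ≠ i := by simp [Fin.ext_iff, hj₀def]
    have hmem : j₀ ∈ Finset.univ.erase i := Finset.mem_erase.mpr ⟨hj₀i, Finset.mem_univ _⟩
    have hsplit : ∀ y : Fin (N + 1) → ZMod K,
        Mw N K y = Fw N K y i + (Fw N K y j₀ + ∑ j ∈ (Finset.univ.erase i).erase j₀, Fw N K y j) := by
      intro y
      rw [Mw, ← Finset.add_sum_erase _ _ (Finset.mem_univ i),
        ← Finset.add_sum_erase _ _ hmem]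
    have hrest : ∑ j ∈ (Finset.univ.erase i).erase j₀, Fw N K x' j
        = ∑ j ∈ (Finset.univ.erase i).erase j₀, Fw N K x j := by
      apply Finset.sum_congr rfl
      intro j hj
      rw [Finset.mem_erase, Finset.mem_erase] at hj
      exact hsame j hj.2.1 (by
        intro h
        exact hj.1 (by simp [Fin.ext_iff, hj₀def, h]))
    rw [hsplit x', hsplit x, hrest, hFi', hFi]
    have h1 : Fw N K x' j₀ ≤ N + 1 - j₀.val := Fw_le N K x' j₀
    have h2 : j₀.val = i.val + 1 := rfl
    omega

/-- In any infinite fair execution, node 0 fires infinitely often. -/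
theorem node_zero_fires_infinitely_often (N K : ℕ) (hN : 1 ≤ N)
    (x : ℕ → Fin (N + 1) → ZMod K) (hexec : Execution N K x) (hfair : Fair N K x) :
    Set.Infinite {t : ℕ | Fires N K x 0 t} := by
  by_contra h
  rw [Set.not_infinite] at h
  obtain ⟨T, hT⟩ := h.bddAbove
  have key : ∀ t, T + 1 ≤ t → Mw N K (x (t + 1)) < Mw N K (x t) := by
    intro t ht
    obtain ⟨i, hpi, hup⟩ := hexec t
    by_cases hi : i = 0
    · exfalso
      have : t ∈ {t : ℕ | Fires N K x 0 t} := by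
        subst hi; exact ⟨hpi, hup⟩
      have := hT this
      omega
    · exact measure_decreases N K (x t) (x (t + 1)) i
        (fun h0 => hi (Fin.ext (by simpa using h0))) hpi hup
  have hdec : ∀ n, Mw N K (x (T + 1 + n)) + n ≤ Mw N K (x (T + 1)) := by
    intro n
    induction n with
    | zero => simp
    | succ n ih =>
      have := key (T + 1 + n) (by omega)
      have h2 : T + 1 + n + 1 = T + 1 + (n + 1) := by omega
      rw [h2] at this
      omega
  have := hdec (Mw N K (x (T + 1)) + 1)
  omega
end

section
/- If at some point in an execution the value a occurs only at node 0 (x[0] = a and x[i] ≠ a for all i ≥ 1), and subsequently no execution step introduces a except by copying, then at any later time, if a node i holds a, every node j with 0 ≤ j ≤ i also held a at some earlier or equal time; in particular, if node N holds a and node 0 has held a continuously, the configuration is all-a (all nodes equal a), i.e., legitimate. -/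
/-- If `a` occurs only at node 0 and node 0 does not fire until `t'`, and node N holds `a`
at time `t'`, then the configuration at `t'` is constant `a`, hence legitimate. -/
theorem all_a_of_value_reaches_N (N K : ℕ) (hN : 1 ≤ N)
    (x : ℕ → Fin (N + 1) → ZMod K) (hexec : Execution N K x)
    (a : ZMod K) (t t' : ℕ) (htt' : t ≤ t')
    (h0 : x t 0 = a) (hrest : ∀ i : Fin (N + 1), 0 < i.val → x t i ≠ a)
    (hnofire : ∀ s, t ≤ s → s < t' → ¬ Fires N K x 0 s)
    (hN' : x t' (Fin.last N) = a) :
    (∀ i : Fin (N + 1), x t' i = a) ∧ Legitimate N K (x t') := by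
  have key : ∀ s, t ≤ s → s ≤ t' →
      ∀ i j : Fin (N+1), j.val ≤ i.val → x s i = a → x s j = a := by
    intro s hts
    induction s, hts using Nat.le_induction with
    | base =>
      intro _ i j hji hi
      rcases Nat.eq_zero_or_pos i.val with h0i | h0i
      · have hj : j = 0 := Fin.ext (by simp only [Fin.val_zero]; omega)
        rw [hj]; exact h0
      · exact absurd hi (hrest i h0i)
    | succ s hs ih =>
      intro hs1 i j hji hi
      have hst' : s < t' := by omega
      have ihdc := ih (le_of_lt hst')
      obtain ⟨k, hpriv, hupd⟩ := hexec s
      by_cases hk0 : k.val = 0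
      · exfalso
        have hk : k = 0 := Fin.ext hk0
        exact hnofire s hs hst' (by rw [← hk]; exact ⟨hpriv, hupd⟩)
      · have hfv : fireVal N K (x s) k = x s (ringPred N k) := by
          simp [fireVal, hk0]
        have hne : x s k ≠ x s (ringPred N k) := by
          rcases hpriv with ⟨h, _⟩ | ⟨_, h⟩
          · exact absurd h hk0
          · exact h
        rw [hupd, hfv] at hi ⊢
        by_cases hik : i = k
        · subst hik
          rw [Function.update_self] at hi
          by_cases hjk : j = i
          · subst hjk; rw [Function.update_self]; exact hi
          · rw [Function.update_of_ne hjk]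
            have hv : j.val ≠ i.val := fun h => hjk (Fin.ext h)
            exact ihdc (ringPred N i) j (by simp only [ringPred]; omega) hi
        · rw [Function.update_of_ne hik] at hi
          by_cases hjk : j = k
          · exfalso
            subst hjk
            have hka : x s j = a := ihdc i j hji hi
            have hpa : x s (ringPred N j) = a :=
              ihdc i (ringPred N j) (by simp only [ringPred]; omega) hi
            exact hne (hka.trans hpa.symm)
          · rw [Function.update_of_ne hjk]
            exact ihdc i j hji hi
  have hall : ∀ i : Fin (N+1), x t' i = a := fun i =>
    key t' htt' le_rfl (Fin.last N) i (by simpa using i.is_le) hN'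
  exact ⟨hall, a, N+1, le_rfl, fun i _ => hall i, fun i hi => absurd hi (by omega)⟩
end

section
/- Dijkstra's mutual exclusion protocol on a ring of N+1 nodes with K states per node self-stabilizes when K = N and N > 1: every fair execution under a central daemon eventually reaches a legitimate configuration. -/
/-! ### Auxiliary development -/

section Dijkstra

variable {N K : ℕ}

/-- Weight of node `i` in the potential: `N+1-i` if node `i ≥ 1` is privileged. -/
def dwt (N K : ℕ) (c : Fin (N + 1) → ZMod K) (i : Fin (N + 1)) : ℕ :=
  if 0 < i.val ∧ c i ≠ c (ringPred N i) then N + 1 - i.val else 0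

/-- Potential decreasing under segment fires. -/
def dpot (N K : ℕ) (c : Fin (N + 1) → ZMod K) : ℕ := ∑ i, dwt N K c i

lemma ringPred_val (i : Fin (N + 1)) : (ringPred N i).val = i.val - 1 := rfl

lemma dwt_eq_of (c : Fin (N + 1) → ZMod K) (j : Fin (N + 1))
    (i : Fin (N + 1)) (hij : i ≠ j) (hij' : i.val ≠ j.val + 1) :
    dwt N K (Function.update c j (c (ringPred N j))) i = dwt N K c i := by
  by_cases hi : 0 < i.val
  · have h1 : Function.update c j (c (ringPred N j)) i = c i := Function.update_of_ne hij _ _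
    have h2 : ringPred N i ≠ j := by
      intro h
      apply hij'
      have h4 : i.val - 1 = j.val := by
        simpa [ringPred_val] using congrArg Fin.val h
      omega
    have h3 : Function.update c j (c (ringPred N j)) (ringPred N i) = c (ringPred N i) :=
      Function.update_of_ne h2 _ _
    simp [dwt, h1, h3]
  · simp [dwt, hi]

lemma dpot_decrease (c : Fin (N + 1) → ZMod K) (j : Fin (N + 1)) (hj : 0 < j.val)
    (hne : c j ≠ c (ringPred N j)) :
    dpot N K (Function.update c j (c (ringPred N j))) < dpot N K c := by
  set c' := Function.update c j (c (ringPred N j)) with hc'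
  have hrpj : ringPred N j ≠ j := by
    intro h
    have h4 : j.val - 1 = j.val := by simpa [ringPred_val] using congrArg Fin.val h
    omega
  have hj0 : dwt N K c' j = 0 := by
    have h1 : c' j = c (ringPred N j) := Function.update_self _ _ _
    have h2 : c' (ringPred N j) = c (ringPred N j) := Function.update_of_ne hrpj _ _
    simp [dwt, h1, h2]
  have hjc : dwt N K c j = N + 1 - j.val := if_pos ⟨hj, hne⟩
  have hjle : j.val ≤ N := by have := j.isLt; omega
  by_cases hjN : j.val = N
  · unfold dpot
    apply Finset.sum_lt_sum
    · intro i _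
      by_cases hij : i = j
      · rw [hij, hj0]; exact Nat.zero_le _
      · rw [hc', dwt_eq_of c j i hij (by have := i.isLt; omega)]
    · refine ⟨j, Finset.mem_univ _, ?_⟩
      rw [hj0, hjc]; omega
  · have hjN' : j.val < N := by omega
    set j' : Fin (N + 1) := ⟨j.val + 1, by omega⟩ with hj'def
    have hj'j : j' ≠ j := by
      intro h
      have := congrArg Fin.val h
      simp [hj'def] at this
    have hmem : j' ∈ Finset.univ.erase j := Finset.mem_erase.mpr ⟨hj'j, Finset.mem_univ _⟩
    have hsplit : ∀ d : Fin (N + 1) → ZMod K,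
        dpot N K d = dwt N K d j + (dwt N K d j' + ∑ i ∈ (Finset.univ.erase j).erase j', dwt N K d i) := by
      intro d
      rw [dpot, ← Finset.add_sum_erase _ _ (Finset.mem_univ j), ← Finset.add_sum_erase _ _ hmem]
    rw [hsplit c', hsplit c]
    have hS : ∑ i ∈ (Finset.univ.erase j).erase j', dwt N K c' i
        = ∑ i ∈ (Finset.univ.erase j).erase j', dwt N K c i := by
      apply Finset.sum_congr rfl
      intro i hi
      rw [Finset.mem_erase, Finset.mem_erase] at hi
      rw [hc']
      apply dwt_eq_of c j i hi.2.1
      intro h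
      exact hi.1 (Fin.ext (by simp [hj'def, h]))
    have hb : dwt N K c' j' ≤ N - j.val := by
      have : dwt N K c' j' ≤ N + 1 - j'.val := by
        unfold dwt; split <;> omega
      simpa [hj'def] using this
    rw [hS, hj0, hjc]
    have := Nat.zero_le (dwt N K c j')
    omega

variable (x : ℕ → Fin (N + 1) → ZMod K)

lemma step_cases (hexec : Execution N K x) (r : ℕ) (h : ¬ Fires N K x 0 r) :
    ∃ j : Fin (N + 1), 0 < j.val ∧ x r j ≠ x r (ringPred N j) ∧
      x (r + 1) = Function.update (x r) j (x r (ringPred N j)) := by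
  obtain ⟨i, hp, hu⟩ := hexec r
  by_cases hi : i.val = 0
  · exfalso
    have hi0 : i = 0 := Fin.ext (by simpa using hi)
    rw [hi0] at hp hu
    exact h ⟨hp, hu⟩
  · have hip : 0 < i.val := Nat.pos_of_ne_zero hi
    have hne : x r i ≠ x r (ringPred N i) := by
      rcases hp with ⟨h0, _⟩ | ⟨_, h1⟩
      · omega
      · exact h1
    refine ⟨i, hip, hne, ?_⟩
    rw [hu]
    unfold fireVal
    rw [if_neg hi]

lemma x0_step (hexec : Execution N K x) (r : ℕ) (h : ¬ Fires N K x 0 r) :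
    x (r + 1) 0 = x r 0 := by
  obtain ⟨j, hj, _, hu⟩ := step_cases x hexec r h
  rw [hu, Function.update_of_ne]
  intro h0
  rw [← h0] at hj
  simp at hj

lemma x0_const (hexec : Execution N K x) (a b : ℕ) (hab : a ≤ b)
    (h : ∀ r, a ≤ r → r < b → ¬ Fires N K x 0 r) : x b 0 = x a 0 := by
  induction b, hab using Nat.le_induction with
  | base => rfl
  | succ b hb ih =>
    rw [x0_step x hexec b (h b hb (by omega))]
    exact ih (fun r h1 h2 => h r h1 (by omega))

lemma fire0_exists (hexec : Execution N K x) (t : ℕ) :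
    ∃ s, t ≤ s ∧ Fires N K x 0 s := by
  have key : ∀ w t, dpot N K (x t) ≤ w → ∃ s, t ≤ s ∧ Fires N K x 0 s := by
    intro w
    induction w with
    | zero =>
      intro t hw
      by_cases hf : Fires N K x 0 t
      · exact ⟨t, le_rfl, hf⟩
      · exfalso
        obtain ⟨j, hj, hne, hu⟩ := step_cases x hexec t hf
        have := dpot_decrease (x t) j hj hne
        rw [← hu] at this
        omega
    | succ w ih =>
      intro t hw
      by_cases hf : Fires N K x 0 t
      · exact ⟨t, le_rfl, hf⟩
      · obtain ⟨j, hj, hne, hu⟩ := step_cases x hexec t hf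
        have hd := dpot_decrease (x t) j hj hne
        rw [← hu] at hd
        obtain ⟨s, hs1, hs2⟩ := ih (t + 1) (by omega)
        exact ⟨s, by omega, hs2⟩
  exact key (dpot N K (x t)) t le_rfl

lemma fire0_next (hexec : Execution N K x) (t : ℕ) :
    ∃ s, t ≤ s ∧ Fires N K x 0 s ∧ ∀ r, t ≤ r → r < s → ¬ Fires N K x 0 r := by
  classical
  obtain ⟨s0, hs0, hf0⟩ := fire0_exists x hexec t
  have hex : ∃ d, Fires N K x 0 (t + d) := ⟨s0 - t, by rwa [Nat.add_sub_cancel' hs0]⟩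
  refine ⟨t + Nat.find hex, by omega, Nat.find_spec hex, ?_⟩
  intro r hr hrs hfr
  exact Nat.find_min hex (m := r - t) (by omega) (by rwa [Nat.add_sub_cancel' hr])

lemma fire0_effect (s : ℕ) (hf : Fires N K x 0 s) :
    x (s + 1) 0 = x s 0 + 1 ∧ ∀ i : Fin (N + 1), 0 < i.val → x (s + 1) i = x s i := by
  obtain ⟨hp, hu⟩ := hf
  constructor
  · rw [hu, Function.update_self]
    unfold fireVal
    rw [if_pos (by simp)]
  · intro i hi
    rw [hu, Function.update_of_ne]
    intro h0
    rw [h0] at hi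
    simp at hi

lemma fire0_last (s : ℕ) (hf : Fires N K x 0 s) : x s (Fin.last N) = x s 0 := by
  rcases hf.1 with ⟨_, h⟩ | ⟨h, _⟩
  · exact h.symm
  · simp at h

/-- If at some time all segment values differ from `x0`, a legitimate configuration is reached. -/
lemma escape (hexec : Execution N K x) (t : ℕ)
    (h : ∀ i : Fin (N + 1), 0 < i.val → x t i ≠ x t 0) :
    ∃ s, Legitimate N K (x s) := by
  obtain ⟨s, hts, hfs, hmin⟩ := fire0_next x hexec t
  set v := x t 0 with hv
  have hinv : ∀ e, t + e ≤ s → (x (t + e) 0 = v ∧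
      ∀ i : Fin (N + 1), 0 < i.val → x (t + e) i = v → x (t + e) (ringPred N i) = v) := by
    intro e
    induction e with
    | zero => exact fun _ => ⟨rfl, fun i hi hiv => absurd hiv (h i hi)⟩
    | succ e ih =>
      intro he
      have hE : t + (e + 1) = t + e + 1 := rfl
      rw [hE] at he ⊢
      obtain ⟨ih0, ihp⟩ := ih (by omega)
      have hnf : ¬ Fires N K x 0 (t + e) := hmin _ (by omega) (by omega)
      obtain ⟨j, hj, hjne, hu⟩ := step_cases x hexec (t + e) hnf
      have hj0 : (0 : Fin (N + 1)) ≠ j := by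
        intro h0; rw [← h0] at hj; simp at hj
      have h0 : x (t + e + 1) 0 = v := by
        rw [hu, Function.update_of_ne hj0]; exact ih0
      refine ⟨h0, ?_⟩
      intro i hi hiv
      have hrpj : ringPred N j ≠ j := by
        intro hh
        have h4 : j.val - 1 = j.val := by simpa [ringPred_val] using congrArg Fin.val hh
        omega
      by_cases hij : i = j
      · subst hij
        have h1 : x (t + e + 1) i = x (t + e) (ringPred N i) := by
          rw [hu, Function.update_self]
        have h2 : x (t + e + 1) (ringPred N i) = x (t + e) (ringPred N i) := by
          rw [hu, Function.update_of_ne hrpj]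
        rw [h2, ← h1]; exact hiv
      · have hxi : x (t + e) i = v := by
          rw [hu, Function.update_of_ne hij] at hiv; exact hiv
        have hpr : x (t + e) (ringPred N i) = v := ihp i hi hxi
        by_cases hpj : ringPred N i = j
        · exfalso
          apply hjne
          have hjv : x (t + e) j = v := by rw [← hpj]; exact hpr
          have := ihp j hj hjv
          rw [hjv, this]
        · rw [hu, Function.update_of_ne hpj]; exact hpr
  obtain ⟨h0s, hps⟩ := hinv (s - t) (by omega)
  have hse : t + (s - t) = s := by omega
  rw [hse] at h0s hps
  have hlast : x s (Fin.last N) = v := by rw [fire0_last x s hfs]; exact h0s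
  have hchain : ∀ m, m ≤ N → x s ⟨N - m, by omega⟩ = v := by
    intro m
    induction m with
    | zero =>
      intro _
      have : (⟨N - 0, by omega⟩ : Fin (N + 1)) = Fin.last N := Fin.ext (by simp)
      rw [this]; exact hlast
    | succ m ihm =>
      intro hm
      have h1 : 0 < N - m := by omega
      have h2 := hps ⟨N - m, by omega⟩ h1 (ihm (by omega))
      have h3 : ringPred N (⟨N - m, by omega⟩ : Fin (N + 1)) = ⟨N - (m + 1), by omega⟩ :=
        Fin.ext (by simp [ringPred_val]; omega)
      rw [h3] at h2
      exact h2
  have hall : ∀ i : Fin (N + 1), x s i = v := by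
    intro i
    have hi := i.isLt
    have := hchain (N - i.val) (by omega)
    have heq : (⟨N - (N - i.val), by omega⟩ : Fin (N + 1)) = i := Fin.ext (by simp; omega)
    rw [heq] at this
    exact this
  exact ⟨s, v, N + 1, le_rfl, fun i _ => hall i, fun i hle => absurd i.isLt (by omega)⟩

/-- Segment values originate either from the initial segment or from `x0` at an intermediate time. -/
lemma seg_origin (hexec : Execution N K x) (t : ℕ) :
    ∀ d (i : Fin (N + 1)), 0 < i.val →
      (∃ i' : Fin (N + 1), 0 < i'.val ∧ x (t + d) i = x t i') ∨
      (∃ r, t ≤ r ∧ r < t + d ∧ x (t + d) i = x r 0) := by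
  intro d
  induction d with
  | zero => exact fun i hi => Or.inl ⟨i, hi, rfl⟩
  | succ d ih =>
    intro i hi
    have hE : t + (d + 1) = t + d + 1 := rfl
    rw [hE]
    obtain ⟨j, hp, hu⟩ := hexec (t + d)
    have hstep : x (t + d + 1) = Function.update (x (t + d)) j (fireVal N K (x (t + d)) j) := hu
    by_cases hij : i = j
    · subst hij
      have hj0 : ¬ (i.val = 0) := by omega
      have hval : x (t + d + 1) i = x (t + d) (ringPred N i) := by
        rw [hstep, Function.update_self]
        unfold fireVal
        rw [if_neg hj0]
      by_cases hrp : 0 < (ringPred N i).val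
      · rcases ih (ringPred N i) hrp with ⟨i', hi', he⟩ | ⟨r, hr1, hr2, he⟩
        · exact Or.inl ⟨i', hi', by rw [hval, he]⟩
        · exact Or.inr ⟨r, hr1, by omega, by rw [hval, he]⟩
      · have hrp0 : ringPred N i = 0 := by
          apply Fin.ext
          simp only [Fin.val_zero]
          omega
        exact Or.inr ⟨t + d, by omega, by omega, by rw [hval, hrp0]⟩
    · have hval : x (t + d + 1) i = x (t + d) i := by
        rw [hstep, Function.update_of_ne hij]
      rcases ih i hi with ⟨i', hi', he⟩ | ⟨r, hr1, hr2, he⟩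
      · exact Or.inl ⟨i', hi', by rw [hval, he]⟩
      · exact Or.inr ⟨r, hr1, by omega, by rw [hval, he]⟩

/-- Successive firings of node 0 take all successive values. -/
lemma fseq (hexec : Execution N K x) (t : ℕ) : ∀ j : ℕ, ∃ s, t ≤ s ∧ Fires N K x 0 s ∧
    x s 0 = x t 0 + (j : ZMod K) ∧
    ∀ r, t ≤ r → r ≤ s → ∃ j' : ℕ, j' ≤ j ∧ x r 0 = x t 0 + (j' : ZMod K) := by
  intro j
  induction j with
  | zero =>
    obtain ⟨s, hts, hf, hmin⟩ := fire0_next x hexec t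
    refine ⟨s, hts, hf, ?_, ?_⟩
    · have := x0_const x hexec t s hts hmin
      simp [this]
    · intro r h1 h2
      refine ⟨0, le_rfl, ?_⟩
      have := x0_const x hexec t r h1 (fun r' ha hb => hmin r' ha (by omega))
      simp [this]
  | succ j ihj =>
    obtain ⟨s1, hts1, hf1, hval1, hall1⟩ := ihj
    have heff := fire0_effect x s1 hf1
    have hnew : x (s1 + 1) 0 = x t 0 + ((j + 1 : ℕ) : ZMod K) := by
      rw [heff.1, hval1]
      push_cast
      ring
    obtain ⟨s, hs1s, hf, hmin⟩ := fire0_next x hexec (s1 + 1)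
    have hconst : ∀ r, s1 + 1 ≤ r → r ≤ s → x r 0 = x (s1 + 1) 0 := fun r h1 h2 =>
      x0_const x hexec (s1 + 1) r h1 (fun r' ha hb => hmin r' ha (by omega))
    refine ⟨s, by omega, hf, by rw [hconst s hs1s le_rfl, hnew], ?_⟩
    intro r h1 h2
    by_cases hr : r ≤ s1
    · obtain ⟨j', hj', he⟩ := hall1 r h1 hr
      exact ⟨j', by omega, he⟩
    · exact ⟨j + 1, le_rfl, by rw [hconst r (by omega) h2, hnew]⟩

/-- If legitimacy is never reached, the segment at any node-0 firing time realizes every value. -/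
lemma rainbow_surj (hexec : Execution N K x) (hK : K = N) (hN : 1 < N)
    (hseg : ∀ t, ∃ i : Fin (N + 1), 0 < i.val ∧ x t i = x t 0)
    (τ : ℕ) (hf : Fires N K x 0 τ) (w : ZMod K) :
    ∃ i : Fin (N + 1), 0 < i.val ∧ x τ i = w := by
  haveI : NeZero K := ⟨by omega⟩
  set v := x τ 0 with hv
  set j := (w - v).val with hjdef
  have hjK : j < K := ZMod.val_lt _
  have hw : v + (j : ZMod K) = w := by
    rw [hjdef, ZMod.natCast_rightInverse (w - v)]
    ring
  by_cases hj0 : j = 0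
  · refine ⟨Fin.last N, by simp [Fin.val_last]; omega, ?_⟩
    rw [fire0_last x τ hf, ← hv, ← hw, hj0]
    simp
  · obtain ⟨s1, hts1, hf1, hval1, hall1⟩ := fseq x hexec τ (j - 1)
    have heff := fire0_effect x s1 hf1
    have hcast : ((j - 1 : ℕ) : ZMod K) + 1 = (j : ZMod K) := by
      rw [← Nat.cast_one (R := ZMod K), ← Nat.cast_add]
      congr 1
      omega
    have hus : x (s1 + 1) 0 = v + (j : ZMod K) := by
      rw [heff.1, hval1, ← hv, add_assoc, hcast]
    obtain ⟨i, hi, hieq⟩ := hseg (s1 + 1)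
    obtain ⟨d, hd⟩ : ∃ d, s1 + 1 = τ + d := ⟨s1 + 1 - τ, by omega⟩
    rw [hd] at hieq hus
    rcases seg_origin x hexec τ d i hi with ⟨i', hi', he⟩ | ⟨r, hr1, hr2, he⟩
    · refine ⟨i', hi', ?_⟩
      rw [← he, hieq, hus, hw]
    · exfalso
      rw [← hd] at hr2
      obtain ⟨j', hj', hrv⟩ := hall1 r hr1 (by omega)
      have hvv : v + (j : ZMod K) = v + (j' : ZMod K) := by
        rw [← hus, ← hieq, he, hrv, hv]
      have hjj' : (j : ZMod K) = (j' : ZMod K) := by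
        exact add_left_cancel hvv
      have hje : j = j' := by
        have h1 := ZMod.val_cast_of_lt hjK
        have h2 := ZMod.val_cast_of_lt (show j' < K by omega)
        rw [← h1, ← h2, hjj']
      omega

/-- At node-0 firing times the segment values are pairwise distinct. -/
lemma rainbow_inj (hexec : Execution N K x) (hK : K = N) (hN : 1 < N)
    (hseg : ∀ t, ∃ i : Fin (N + 1), 0 < i.val ∧ x t i = x t 0)
    (τ : ℕ) (hf : Fires N K x 0 τ) :
    ∀ i i' : Fin (N + 1), 0 < i.val → 0 < i'.val → x τ i = x τ i' → i = i' := by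
  haveI : NeZero K := ⟨by omega⟩
  have hsurj := rainbow_surj x hexec hK hN hseg τ hf
  set T : Finset (Fin (N + 1)) := Finset.univ.erase 0 with hT
  have hmemT : ∀ i : Fin (N + 1), 0 < i.val → i ∈ T := by
    intro i hi
    refine Finset.mem_erase.mpr ⟨?_, Finset.mem_univ _⟩
    intro h; rw [h] at hi; simp at hi
  have hTcard : T.card = N := by
    rw [hT, Finset.card_erase_of_mem (Finset.mem_univ _), Finset.card_univ, Fintype.card_fin]
    omega
  have himg : T.image (x τ) = Finset.univ := by
    apply Finset.eq_univ_iff_forall.mpr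
    intro w
    obtain ⟨i, hi, he⟩ := hsurj w
    exact Finset.mem_image.mpr ⟨i, hmemT i hi, he⟩
  have hinj : Set.InjOn (x τ) ↑T := by
    apply Finset.card_image_iff.mp
    rw [himg, Finset.card_univ, ZMod.card, hTcard, hK]
  intro i i' h1 h2 he
  exact hinj (Finset.mem_coe.mpr (hmemT i h1)) (Finset.mem_coe.mpr (hmemT i' h2)) he

end Dijkstra

/-- Dijkstra's protocol self-stabilizes for K = N, N > 1. -/
theorem dijkstra_self_stabilizes (N K : ℕ) (hN : 1 < N) (hK : K = N)
    (x : ℕ → Fin (N + 1) → ZMod K) (hexec : Execution N K x) (hfair : Fair N K x) :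
    ∃ t : ℕ, Legitimate N K (x t) := by
  by_contra hcon
  push_neg at hcon
  have hseg : ∀ t, ∃ i : Fin (N + 1), 0 < i.val ∧ x t i = x t 0 := by
    intro t
    by_contra h
    push_neg at h
    obtain ⟨s, hs⟩ := escape x hexec t h
    exact hcon s hs
  haveI : NeZero K := ⟨by omega⟩
  haveI : Fact (1 < K) := ⟨by omega⟩
  obtain ⟨τ, -, hfτ, -⟩ := fire0_next x hexec 0
  set v := x τ 0 with hv
  obtain ⟨τ', hττ', hfτ', hmin⟩ := fire0_next x hexec (τ + 1)
  have heffτ := fire0_effect x τ hfτ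
  have hconst : ∀ r, τ + 1 ≤ r → r ≤ τ' → x r 0 = v + 1 := by
    intro r h1 h2
    rw [x0_const x hexec (τ + 1) r h1 (fun r' ha hb => hmin r' ha (by omega)), heffτ.1]
  have hone : (v + 1 : ZMod K) ≠ v := by
    intro h
    have h1 : (1 : ZMod K) = 0 := by
      have : v + 1 = v + 0 := by rw [h, add_zero]
      exact add_left_cancel this
    have h2 := congrArg ZMod.val h1
    rw [ZMod.val_one, ZMod.val_zero] at h2
    omega
  have hlastτ : x τ (Fin.last N) = v := fire0_last x τ hfτ
  have hinvar : ∀ e, τ + e ≤ τ' → ∀ i : Fin (N + 1), 0 < i.val →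
      x (τ + e) i = v → i = Fin.last N := by
    intro e
    induction e with
    | zero =>
      intro _ i hi hiv
      rw [show τ + 0 = τ from rfl] at hiv
      exact rainbow_inj x hexec hK hN hseg τ hfτ i (Fin.last N) hi
        (by simp [Fin.val_last]; omega) (by rw [hiv, hlastτ])
    | succ e ihe =>
      intro he i hi hiv
      rw [show τ + (e + 1) = τ + e + 1 from rfl] at he hiv
      by_cases he0 : e = 0
      · subst he0
        have hv2 : x τ i = v := by
          rw [← heffτ.2 i hi]
          exact hiv
        exact ihe (by omega) i hi hv2
      · have hnf : ¬ Fires N K x 0 (τ + e) := hmin (τ + e) (by omega) (by omega)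
        obtain ⟨jj, hjj, hjne, hu⟩ := step_cases x hexec (τ + e) hnf
        by_cases hij : i = jj
        · subst hij
          have h1 : x (τ + e + 1) i = x (τ + e) (ringPred N i) := by
            rw [hu, Function.update_self]
          by_cases h0 : (ringPred N i).val = 0
          · exfalso
            have hrp0 : ringPred N i = 0 := Fin.ext (by simpa using h0)
            have hx0 : x (τ + e) 0 = v := by
              rw [← hrp0, ← h1]
              exact hiv
            rw [hconst (τ + e) (by omega) (by omega)] at hx0
            exact hone hx0
          · exfalso
            have hval : x (τ + e) (ringPred N i) = v := by rw [← h1]; exact hiv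
            have := ihe (by omega) (ringPred N i) (Nat.pos_of_ne_zero h0) hval
            have hvv := congrArg Fin.val this
            rw [ringPred_val, Fin.val_last] at hvv
            have := i.isLt
            omega
        · have hval : x (τ + e) i = v := by
            rw [hu, Function.update_of_ne hij] at hiv
            exact hiv
          exact ihe (by omega) i hi hval
  obtain ⟨i0, hi0, hieq⟩ := rainbow_surj x hexec hK hN hseg τ' hfτ' v
  have hlast0 : i0 = Fin.last N := by
    apply hinvar (τ' - τ) (by omega) i0 hi0
    rw [show τ + (τ' - τ) = τ' by omega]
    exact hieq
  have hlast' : x τ' (Fin.last N) = v + 1 := by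
    rw [fire0_last x τ' hfτ']
    exact hconst τ' (by omega) le_rfl
  rw [hlast0, hlast'] at hieq
  exact hone hieq
end

section
/- In any execution of Dijkstra's protocol, between two consecutive firings of node 0, each node i with 1 ≤ i ≤ N fires at most N times; consequently, if node 0 never fires after time t, the execution has no enabled moves after at most N·N further steps, contradicting the fact that some node is always privileged — hence node 0 fires infinitely often. -/
/-- Variant function: sum over privileged nodes i ≥ 1 of the weight N + 1 - i. -/
def variantF (N K : ℕ) (x : Fin (N + 1) → ZMod K) : ℕ :=
  ∑ i : Fin (N + 1), if 0 < i.val ∧ x i ≠ x (ringPred N i) then N + 1 - i.val else 0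

lemma variant_dec (N K : ℕ) (hN : 1 ≤ N) (y : Fin (N+1) → ZMod K) (i : Fin (N+1))
    (hi : 0 < i.val) (hp : y i ≠ y (ringPred N i)) :
    variantF N K (Function.update y i (y (ringPred N i))) < variantF N K y := by
  set y' := Function.update y i (y (ringPred N i)) with hy'
  have hpred_ne : ringPred N i ≠ i := Fin.ne_of_val_ne (by simp only [ringPred]; omega)
  have hy'i : y' i = y (ringPred N i) := Function.update_self _ _ _
  have hy'ne : ∀ j, j ≠ i → y' j = y j := fun j hj => Function.update_of_ne hj _ _
  set f : Fin (N+1) → ℕ := fun j => if 0 < j.val ∧ y j ≠ y (ringPred N j) then N+1-j.val else 0 with hf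
  set g : Fin (N+1) → ℕ := fun j => if 0 < j.val ∧ y' j ≠ y' (ringPred N j) then N+1-j.val else 0 with hg
  have hvf : variantF N K y = ∑ j, f j := rfl
  have hvg : variantF N K y' = ∑ j, g j := rfl
  have hgi : g i = 0 := by
    simp [hg, hy'i, hy'ne _ hpred_ne]
  have hfi : f i = N+1 - i.val := by simp only [hf, hi, hp, ne_eq, not_false_eq_true, and_self, if_true]
  have heq : ∀ j : Fin (N+1), j ≠ i → j.val ≠ i.val + 1 → g j = f j := by
    intro j hj hj1
    by_cases h0 : 0 < j.val
    · have hpj : ringPred N j ≠ i := Fin.ne_of_val_ne (by simp only [ringPred]; omega)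
      simp only [hg, hf, hy'ne _ hj, hy'ne _ hpj]
    · simp only [hg, hf, h0, false_and, if_false]
  rw [hvf, hvg]
  rcases eq_or_lt_of_le (Nat.lt_succ_iff.mp i.isLt) with hiN | hiN
  · have hrest : ∀ j ∈ Finset.univ.erase i, g j = f j := by
      intro j hj
      exact heq j (Finset.ne_of_mem_erase hj) (by have := j.isLt; omega)
    calc ∑ j, g j = g i + ∑ j ∈ Finset.univ.erase i, g j :=
          (Finset.add_sum_erase _ _ (Finset.mem_univ i)).symm
      _ = 0 + ∑ j ∈ Finset.univ.erase i, f j := by rw [hgi, Finset.sum_congr rfl hrest]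
      _ < f i + ∑ j ∈ Finset.univ.erase i, f j := by
          have : 0 < f i := by rw [hfi]; omega
          omega
      _ = ∑ j, f j := Finset.add_sum_erase _ _ (Finset.mem_univ i)
  · set s : Fin (N+1) := ⟨i.val+1, by omega⟩ with hs
    have hsi : s ≠ i := Fin.ne_of_val_ne (by simp [hs])
    have hsmem : s ∈ Finset.univ.erase i := Finset.mem_erase.mpr ⟨hsi, Finset.mem_univ _⟩
    have hrest : ∀ j ∈ (Finset.univ.erase i).erase s, g j = f j := by
      intro j hj
      have hjs := Finset.ne_of_mem_erase hj
      have hji := Finset.ne_of_mem_erase (Finset.mem_of_mem_erase hj)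
      refine heq j hji (fun hval => hjs (Fin.ext ?_))
      simp [hs, hval]
    have hgs : g s ≤ N - i.val := by
      simp only [hg, hs]
      split <;> omega
    have hfs : (0:ℕ) ≤ f s := Nat.zero_le _
    have e1 : ∑ j, g j = g i + (g s + ∑ j ∈ (Finset.univ.erase i).erase s, g j) := by
      rw [Finset.add_sum_erase _ _ hsmem, Finset.add_sum_erase _ _ (Finset.mem_univ i)]
    have e2 : ∑ j, f j = f i + (f s + ∑ j ∈ (Finset.univ.erase i).erase s, f j) := by
      rw [Finset.add_sum_erase _ _ hsmem, Finset.add_sum_erase _ _ (Finset.mem_univ i)]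
    have hS : ∑ j ∈ (Finset.univ.erase i).erase s, g j
        = ∑ j ∈ (Finset.univ.erase i).erase s, f j := Finset.sum_congr rfl hrest
    rw [e1, e2, hS, hgi, hfi]
    have : N + 1 - i.val = N - i.val + 1 := by omega
    omega

lemma exists_priv (N K : ℕ) (y : Fin (N+1) → ZMod K) : ∃ i, Privileged N K y i := by
  by_contra h
  push_neg at h
  have hall : ∀ i : Fin (N+1), 0 < i.val → y i = y (ringPred N i) := by
    intro i hi
    have hh := h i
    rw [Privileged] at hh
    push_neg at hh
    exact hh.2 hi
  have hconst : ∀ m, (hm : m ≤ N) → y ⟨m, Nat.lt_succ_of_le hm⟩ = y 0 := by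
    intro m
    induction m with
    | zero => intro _; exact congrArg y (Fin.ext rfl)
    | succ m ih =>
      intro hm
      have h1 := hall ⟨m+1, Nat.lt_succ_of_le hm⟩ (Nat.succ_pos m)
      have hr : ringPred N ⟨m+1, Nat.lt_succ_of_le hm⟩ = ⟨m, Nat.lt_succ_of_le (le_of_lt hm)⟩ :=
        Fin.ext rfl
      rw [h1, hr, ih (le_of_lt hm)]
  have h0 := h 0
  rw [Privileged] at h0
  push_neg at h0
  have hne := h0.1 rfl
  have hlast : y (Fin.last N) = y 0 := by
    have hl : (Fin.last N) = (⟨N, Nat.lt_succ_of_le le_rfl⟩ : Fin (N+1)) := rfl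
    rw [hl]; exact hconst N le_rfl
  exact hne hlast.symm

/-- Every move of a node i ≥ 1 strictly decreases the variant, some node is always
privileged, hence in every infinite execution node 0 fires infinitely often. -/
theorem variant_decreases_and_node_zero_fires (N K : ℕ) (hN : 1 ≤ N)
    (x : ℕ → Fin (N + 1) → ZMod K) (hexec : Execution N K x) :
    (∀ (t : ℕ) (i : Fin (N + 1)), 0 < i.val → Fires N K x i t →
      variantF N K (x (t + 1)) < variantF N K (x t)) ∧
    (∀ y : Fin (N + 1) → ZMod K, ∃ i : Fin (N + 1), Privileged N K y i) ∧
    Set.Infinite {t : ℕ | Fires N K x 0 t} := by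
  have hdec : ∀ (t : ℕ) (i : Fin (N + 1)), 0 < i.val → Fires N K x i t →
      variantF N K (x (t + 1)) < variantF N K (x t) := by
    intro t i hi hf
    obtain ⟨hpriv, hupd⟩ := hf
    rcases hpriv with ⟨h0, _⟩ | ⟨_, hp⟩
    · omega
    · rw [hupd]
      have hfv : fireVal N K (x t) i = x t (ringPred N i) := by
        rw [fireVal, if_neg (by omega)]
      rw [hfv]
      exact variant_dec N K hN (x t) i hi hp
  refine ⟨hdec, exists_priv N K, ?_⟩
  by_contra hfin
  rw [Set.not_infinite] at hfin
  obtain ⟨T, hT⟩ := hfin.bddAbove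
  have hstep : ∀ t, T + 1 ≤ t → variantF N K (x (t + 1)) < variantF N K (x t) := by
    intro t ht
    obtain ⟨i, hpriv, hupd⟩ := hexec t
    have hfires : Fires N K x i t := ⟨hpriv, hupd⟩
    have hi : 0 < i.val := by
      by_contra h
      have : i = 0 := Fin.ext (by rw [Fin.val_zero]; omega)
      rw [this] at hfires
      have : t ≤ T := hT hfires
      omega
    exact hdec t i hi hfires
  have hchain : ∀ k, variantF N K (x (T + 1 + k)) + k ≤ variantF N K (x (T + 1)) := by
    intro k
    induction k with
    | zero => simp
    | succ k ih =>
      have := hstep (T + 1 + k) (by omega)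
      have he : T + 1 + k + 1 = T + 1 + (k + 1) := by omega
      rw [he] at this
      omega
  have := hchain (variantF N K (x (T + 1)) + 1)
  omega
end

section
/- If value a does not occur in configuration x, and at some later time in the execution node 0 holds a, then at the first time node 0 holds a, no other node holds a. -/
/-- If `a` is absent at time t and node 0 first holds `a` at time t' > t,
then at time t' no other node holds `a`. -/
theorem first_time_node_zero_holds_a (N K : ℕ) (hN : 1 ≤ N)
    (x : ℕ → Fin (N + 1) → ZMod K) (hexec : Execution N K x)
    (a : ZMod K) (t t' : ℕ) (htt' : t < t')
    (habsent : ∀ i : Fin (N + 1), x t i ≠ a)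
    (hholds : x t' 0 = a)
    (hfirst : ∀ s, t < s → s < t' → x s 0 ≠ a) :
    ∀ i : Fin (N + 1), 0 < i.val → x t' i ≠ a := by
  have key : ∀ d, t + d ≤ t' → ∀ i : Fin (N + 1), 0 < i.val → x (t + d) i ≠ a := by
    intro d
    induction d with
    | zero => intro _ i hi; exact habsent i
    | succ d ih =>
      intro hle i hi
      have hle' : t + d ≤ t' := by omega
      have h0 : x (t + d) 0 ≠ a := by
        rcases Nat.eq_zero_or_pos d with hd | hd
        · subst hd; simpa using habsent 0
        · exact hfirst (t + d) (by omega) (by omega)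
      obtain ⟨j, _, hupd⟩ := hexec (t + d)
      rw [show t + (d + 1) = t + d + 1 from rfl, hupd]
      by_cases hij : i = j
      · subst hij
        rw [Function.update_self, fireVal, if_neg (by omega)]
        by_cases hp : (ringPred N i).val = 0
        · have : ringPred N i = 0 := Fin.ext hp
          rw [this]; exact h0
        · exact ih hle' _ (Nat.pos_of_ne_zero hp)
      · rw [Function.update_of_ne hij]
        exact ih hle' i hi
  have := key (t' - t) (by omega)
  rwa [Nat.add_sub_cancel' (le_of_lt htt')] at this
end

section
/- If at time t, x[0] = a and x[i] ≠ a for all 1 ≤ i ≤ N, then at the next time t' > t at which node 0 is privileged (x[0] = x[N] = a), the configuration at t' is constant: x[i] = a for all i. -/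
/-- If at time t the value a is held only by node 0 and node 0 does not fire in
[t, t'), then if node N holds a at time t', the configuration at t' is constant equal to a. -/
theorem constant_configuration_at_next_privilege (N K : ℕ) (hN : 1 ≤ N)
    (x : ℕ → Fin (N + 1) → ZMod K) (hexec : Execution N K x)
    (a : ZMod K) (t t' : ℕ) (htt' : t ≤ t')
    (h0 : x t 0 = a) (hrest : ∀ i : Fin (N + 1), 0 < i.val → x t i ≠ a)
    (hnofire : ∀ s, t ≤ s → s < t' → ¬ Fires N K x 0 s)
    (hlast : x t' (Fin.last N) = a) :
    ∀ i : Fin (N + 1), x t' i = a := by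
  have key : ∀ s, t ≤ s → s ≤ t' → ∃ m : ℕ, ∀ i : Fin (N+1), (x s i = a ↔ i.val ≤ m) := by
    intro s hs
    induction s, hs using Nat.le_induction with
    | base =>
      intro _
      refine ⟨0, fun i => ?_⟩
      constructor
      · intro h
        by_contra hc
        exact hrest i (Nat.pos_of_ne_zero (by omega)) h
      · intro h
        have hi : i = 0 := by apply Fin.ext; simp only [Fin.val_zero]; omega
        rw [hi]; exact h0
    | succ s hts ih =>
      intro hs'
      obtain ⟨m, hm⟩ := ih (by omega)
      obtain ⟨i, hpriv, hupd⟩ := hexec s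
      by_cases hi0 : i.val = 0
      · exfalso
        have hi : i = 0 := by apply Fin.ext; simp only [Fin.val_zero]; omega
        exact hnofire s hts (by omega) ⟨hi ▸ hpriv, hi ▸ hupd⟩
      · have hipos : 0 < i.val := Nat.pos_of_ne_zero hi0
        have hfv : fireVal N K (x s) i = x s (ringPred N i) := by
          simp [fireVal, hi0]
        by_cases hc : i.val - 1 ≤ m
        · refine ⟨max m i.val, fun j => ?_⟩
          rw [hupd]
          by_cases hji : j = i
          · subst hji
            rw [Function.update_self, hfv]
            have hra : x s (ringPred N j) = a := (hm _).mpr (by simpa [ringPred] using hc)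
            simp [hra, le_max_right]
          · rw [Function.update_of_ne hji, hm j]
            constructor
            · intro h; omega
            · intro h
              rcases le_or_gt j.val m with h' | h'
              · exact h'
              · exfalso
                have hji' : j.val ≠ i.val := fun he => hji (Fin.ext he)
                omega
        · refine ⟨m, fun j => ?_⟩
          rw [hupd]
          by_cases hji : j = i
          · subst hji
            rw [Function.update_self, hfv]
            constructor
            · intro h
              have := (hm _).mp h
              simp only [ringPred] at this
              omega
            · intro h; exfalso; omega
          · rw [Function.update_of_ne hji]; exact hm j
  obtain ⟨m, hm⟩ := key t' htt' le_rfl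
  have hNm : N ≤ m := (hm (Fin.last N)).mp hlast
  intro i
  exact (hm i).mpr (le_trans (Nat.le_of_lt_succ i.isLt) hNm)
end

section
/- In a legitimate configuration, firing the unique privileged node repeatedly cycles the privilege around the ring: starting from the constant configuration a, after exactly N+1 steps (node 0, then nodes 1, 2, ..., N in order) the configuration is the constant configuration a+1. -/
lemma priv_iff_aux (N K : ℕ) (hK : 2 ≤ K) (a : ZMod K) (t : ℕ) (ht : t ≤ N)
    (y : Fin (N + 1) → ZMod K) (hy : ∀ i, y i = if i.val < t then a + 1 else a)
    (i : Fin (N + 1)) : Privileged N K y i ↔ i.val = t := by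
  haveI : Fact (1 < K) := ⟨hK⟩
  have hne : (a + 1 : ZMod K) ≠ a := fun h => one_ne_zero (add_eq_left.mp h)
  have h0 : y 0 = if 0 < t then a + 1 else a := by rw [hy]; rfl
  have hlast : y (Fin.last N) = a := by
    rw [hy]; exact if_neg (by simp [Fin.last]; omega)
  constructor
  · rintro (⟨hiz, heq⟩ | ⟨hpos, hne'⟩)
    · by_contra h
      rw [h0, hlast, if_pos (by omega)] at heq
      exact hne heq
    · by_contra h
      apply hne'
      rw [hy, hy]
      rcases Nat.lt_or_ge i.val t with hlt | hge
      · rw [if_pos hlt, if_pos (by simp [ringPred]; omega)]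
      · rw [if_neg (by omega), if_neg (by simp [ringPred]; omega)]
  · intro h
    rcases Nat.eq_zero_or_pos t with ht0 | htpos
    · left
      refine ⟨by omega, ?_⟩
      rw [h0, hlast, if_neg (by omega)]
    · right
      refine ⟨by omega, ?_⟩
      rw [hy, hy, if_neg (by omega), if_pos (by simp [ringPred]; omega)]
      exact fun hh => hne hh.symm

/-- From the constant-a configuration the execution is deterministic: node 0 fires,
then nodes 1, ..., N in order; after exactly N+1 steps the configuration is constant a+1, and every
intermediate configuration is legitimate with a unique privileged node. -/
theorem privilege_cycles_around_ring (N K : ℕ) (hN : 1 ≤ N) (hK : 2 ≤ K)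
    (x : ℕ → Fin (N + 1) → ZMod K) (hexec : Execution N K x)
    (a : ZMod K) (hstart : ∀ i : Fin (N + 1), x 0 i = a) :
    (∀ (t : ℕ) (ht : t ≤ N), Fires N K x ⟨t, Nat.lt_succ_of_le ht⟩ t) ∧
    (∀ i : Fin (N + 1), x (N + 1) i = a + 1) ∧
    (∀ t ≤ N + 1, Legitimate N K (x t) ∧ ∃! i : Fin (N + 1), Privileged N K (x t) i) := by
  haveI : Fact (1 < K) := ⟨hK⟩
  set c : ℕ → Fin (N + 1) → ZMod K := fun t i => if i.val < t then a + 1 else a with hc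
  have hcdef : ∀ t i, c t i = if i.val < t then a + 1 else a := fun t i => rfl
  have key : ∀ (t : ℕ) (ht : t ≤ N), (∀ i, x t i = c t i) →
      Fires N K x ⟨t, Nat.lt_succ_of_le ht⟩ t ∧ ∀ i, x (t + 1) i = c (t + 1) i := by
    intro t ht hxt
    have hpriv : ∀ i : Fin (N + 1), Privileged N K (x t) i ↔ i.val = t :=
      fun i => priv_iff_aux N K hK a t ht (x t) (fun i => by rw [hxt i, hcdef]) i
    obtain ⟨i, hi, hupd⟩ := hexec t
    have hit : i = ⟨t, Nat.lt_succ_of_le ht⟩ := Fin.ext ((hpriv i).mp hi)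
    subst hit
    have hfv : fireVal N K (x t) ⟨t, Nat.lt_succ_of_le ht⟩ = a + 1 := by
      unfold fireVal
      rcases Nat.eq_zero_or_pos t with ht0 | htpos
      · rw [if_pos ht0]
        have : x t 0 = a := by rw [hxt, hcdef]; exact if_neg (by omega)
        rw [this]
      · rw [if_neg (show ¬ t = 0 by omega)]
        rw [hxt, hcdef]
        exact if_pos (show t - 1 < t by omega)
    refine ⟨⟨(hpriv _).mpr rfl, hupd⟩, ?_⟩
    intro j
    rw [hupd]
    rcases eq_or_ne j (⟨t, Nat.lt_succ_of_le ht⟩ : Fin (N + 1)) with hj | hj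
    · subst hj
      rw [Function.update_self, hfv, hcdef, if_pos (show t < t + 1 by omega)]
    · rw [Function.update_of_ne hj, hxt, hcdef, hcdef]
      have : j.val ≠ t := fun h => hj (Fin.ext h)
      rcases Nat.lt_or_ge j.val t with h | h
      · rw [if_pos h, if_pos (by omega)]
      · rw [if_neg (by omega), if_neg (by omega)]
  have hconf : ∀ t, t ≤ N + 1 → ∀ i, x t i = c t i := by
    intro t
    induction t with
    | zero => intro _ i; rw [hstart i, hcdef]; exact (if_neg (by omega)).symm
    | succ n ih =>
      intro h i
      exact (key n (by omega) (ih (by omega))).2 i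
  refine ⟨fun t ht => (key t ht (hconf t (by omega))).1, ?_, ?_⟩
  · intro i
    rw [hconf (N + 1) le_rfl i, hcdef]
    exact if_pos i.isLt
  · intro t ht
    have hx := hconf t ht
    constructor
    · refine ⟨a + 1, t, by omega, ?_, ?_⟩
      · intro i hi; rw [hx i, hcdef, if_pos hi]
      · intro i hi; rw [hx i, hcdef, if_neg (by omega)]; ring
    · rcases Nat.lt_or_ge t (N + 1) with htN | htN
      · have hpriv : ∀ i : Fin (N + 1), Privileged N K (x t) i ↔ i.val = t :=
          fun i => priv_iff_aux N K hK a t (by omega) (x t) (fun i => by rw [hx i, hcdef]) i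
        exact ⟨⟨t, htN⟩, (hpriv _).mpr rfl, fun y hy => Fin.ext ((hpriv y).mp hy)⟩
      · have ht' : t = N + 1 := by omega
        have hpriv : ∀ i : Fin (N + 1), Privileged N K (x t) i ↔ i.val = 0 := by
          refine fun i => priv_iff_aux N K hK (a + 1) 0 (Nat.zero_le N) (x t) (fun i => ?_) i
          rw [hx i, hcdef, if_pos (by omega), if_neg (by omega)]
        exact ⟨0, (hpriv _).mpr rfl, fun y hy => Fin.ext ((hpriv y).mp hy)⟩
end
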